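/- arXiv:0809.0784 — 4 statements merged into one kernel-verified Lean document; each statement's English description precedes it below -/
import Mathlib

section
/- Let V be a real vector space, (J₁, J₂, J₃) a hypercomplex structure on V, and R : V×V×V×V → ℝ a curvature-like tensor (multilinear, skew-symmetric in the first two and in the last two arguments, symmetric under swapping the first pair with the second pair, and satisfying the first Bianchi identity). Assume R(X, Y, J₁Z, J₁W) = R(J₁X, J₁Y, Z, W) = R(X, Y, Z, W) and R(X, Y, J₂Z, J₂W) = R(J₂X, J₂Y, Z, W) = −R(X, Y, Z, W) for all X, Y, Z, W. Then R(X, J₂Y, J₂Z, W) = −R(X, Y, Z, W) for all X, Y, Z, W ∈ V. -/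
/-- For a curvature-like tensor `R` on a hypercomplex vector space satisfying the `J₁`- and `J₂`-invariance identities of a pseudo-hyper-Kähler manifold, one has `R(X, J₂Y, J₂Z, W) = −R(X, Y, Z, W)`. -/
theorem curvature_J2_mixed
    (V : Type*) [AddCommGroup V] [Module ℝ V]
    (J1 J2 J3 : V →ₗ[ℝ] V)
    (hJ1sq : J1 ∘ₗ J1 = -LinearMap.id)
    (hJ2sq : J2 ∘ₗ J2 = -LinearMap.id)
    (hJ3sq : J3 ∘ₗ J3 = -LinearMap.id)
    (hJ12 : J1 ∘ₗ J2 = -(J2 ∘ₗ J1))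
    (hJ23 : J2 ∘ₗ J3 = -(J3 ∘ₗ J2))
    (hJ31 : J3 ∘ₗ J1 = -(J1 ∘ₗ J3))
    (hJ3 : J3 = J1 ∘ₗ J2)
    (R : V →ₗ[ℝ] V →ₗ[ℝ] V →ₗ[ℝ] V →ₗ[ℝ] ℝ)
    (hskew1 : ∀ X Y Z W, R X Y Z W = -R Y X Z W)
    (hskew2 : ∀ X Y Z W, R X Y Z W = -R X Y W Z)
    (hpair : ∀ X Y Z W, R X Y Z W = R Z W X Y)
    (hbianchi : ∀ X Y Z W, R X Y Z W + R Y Z X W + R Z X Y W = 0)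
    (hRJ1a : ∀ X Y Z W, R X Y (J1 Z) (J1 W) = R X Y Z W)
    (hRJ1b : ∀ X Y Z W, R (J1 X) (J1 Y) Z W = R X Y Z W)
    (hRJ2a : ∀ X Y Z W, R X Y (J2 Z) (J2 W) = -R X Y Z W)
    (hRJ2b : ∀ X Y Z W, R (J2 X) (J2 Y) Z W = -R X Y Z W) :
    ∀ X Y Z W, R X (J2 Y) (J2 Z) W = -R X Y Z W := by
  have hJ2 : ∀ v, J2 (J2 v) = -v := by
    intro v
    have := LinearMap.ext_iff.mp hJ2sq v
    simpa using this
  -- move J2 between slots 1 and 2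
  have L12 : ∀ X Y Z W, R (J2 X) Y Z W = R X (J2 Y) Z W := by
    intro X Y Z W
    have h := hRJ2b X (J2 Y) Z W
    rw [hJ2] at h
    simp only [map_neg, LinearMap.neg_apply] at h
    linarith
  -- move J2 between slots 3 and 4
  have L34 : ∀ X Y Z W, R X Y (J2 Z) W = R X Y Z (J2 W) := by
    intro X Y Z W
    have h := hRJ2a X Y Z (J2 W)
    rw [hJ2] at h
    simp only [map_neg, LinearMap.neg_apply] at h
    linarith
  have hstar : ∀ X Y Z W,
      R (J2 X) Y Z (J2 W) + R (J2 Z) X Y (J2 W) = R Y Z X W := by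
    intro X Y Z W
    have hb := hbianchi (J2 X) Y Z (J2 W)
    have h2 : R Y Z (J2 X) (J2 W) = -R Y Z X W := hRJ2a Y Z X W
    have h3 : R Z (J2 X) Y (J2 W) = R (J2 Z) X Y (J2 W) := (L12 Z X Y (J2 W)).symm
    linarith
  have hB : ∀ X Y Z W, R (J2 X) Y Z (J2 W) = -R X Y Z W := by
    intro X Y Z W
    have e1 := hstar X Y Z W
    have e2 := hstar Y Z X W
    have e3 := hstar Z X Y W
    have hb := hbianchi X Y Z W
    linarith
  intro X Y Z W
  calc R X (J2 Y) (J2 Z) W = R (J2 X) Y (J2 Z) W := (L12 X Y (J2 Z) W).symm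
    _ = R (J2 X) Y Z (J2 W) := L34 (J2 X) Y Z W
    _ = -R X Y Z W := hB X Y Z W
end

section
/- Let V be a real vector space, (J₁, J₂, J₃) a hypercomplex structure on V, and R : V⁴ → ℝ a curvature-like tensor satisfying R(X, Y, J₁Z, J₁W) = R(J₁X, J₁Y, Z, W) = R(X, Y, Z, W) and R(X, Y, J_αZ, J_αW) = R(J_αX, J_αY, Z, W) = −R(X, Y, Z, W) for α = 2, 3 and all X, Y, Z, W. Then R(X, J₁Y, J₁Z, W) = R(X, Y, Z, W) and R(X, J₂Y, J₂Z, W) = R(X, J₃Y, J₃Z, W) = −R(X, Y, Z, W) for all X, Y, Z, W ∈ V. -/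
/-- Helper: for an anti-invariant complex structure (`ε = -1` case),
`R(X, JY, JZ, W) = -R(X, Y, Z, W)`. -/
lemma curvature_mixed_anti
    {V : Type*} [AddCommGroup V] [Module ℝ V]
    (J : V →ₗ[ℝ] V)
    (hJsq : J ∘ₗ J = -LinearMap.id)
    (R : V →ₗ[ℝ] V →ₗ[ℝ] V →ₗ[ℝ] V →ₗ[ℝ] ℝ)
    (hbianchi : ∀ X Y Z W, R X Y Z W + R Y Z X W + R Z X Y W = 0)
    (hRb : ∀ X Y Z W, R (J X) (J Y) Z W = -R X Y Z W) :
    ∀ X Y Z W, R X (J Y) (J Z) W = -R X Y Z W := by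
  have hJJ : ∀ v : V, J (J v) = -v := by
    intro v
    have := LinearMap.congr_fun hJsq v
    simpa using this
  have m1 : ∀ X Y Z W, R (J X) Y Z W = R X (J Y) Z W := by
    intro X Y Z W
    have h := hRb X (J Y) Z W
    rw [hJJ Y] at h
    have hneg : R (J X) (-Y) Z W = -R (J X) Y Z W := by
      simp [map_neg]
    rw [hneg] at h
    linarith
  have key : ∀ X Y Z W,
      R X (J Y) (J Z) W + R Z (J X) (J Y) W = R Y Z X W := by
    intro X Y Z W
    have hb := hbianchi X (J Y) (J Z) W
    rw [hRb Y Z X W] at hb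
    rw [m1 Z X (J Y) W] at hb
    linarith
  intro X Y Z W
  have h1 := key X Y Z W
  have h2 := key Z X Y W
  have h3 := key Y Z X W
  have hb := hbianchi X Y Z W
  linarith


/-- (Lemma 2, pointwise) For a curvature-like tensor `R` on a hypercomplex vector space satisfying the J-invariance identities of a pseudo-hyper-Kähler manifold, `R(X, J₁Y, J₁Z, W) = R(X, Y, Z, W)` and `R(X, J₂Y, J₂Z, W) = R(X, J₃Y, J₃Z, W) = −R(X, Y, Z, W)`. -/
theorem curvature_mixed_identities
    (V : Type*) [AddCommGroup V] [Module ℝ V]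
    (J1 J2 J3 : V →ₗ[ℝ] V)
    (hJ1sq : J1 ∘ₗ J1 = -LinearMap.id)
    (hJ2sq : J2 ∘ₗ J2 = -LinearMap.id)
    (hJ3sq : J3 ∘ₗ J3 = -LinearMap.id)
    (hJ12 : J1 ∘ₗ J2 = -(J2 ∘ₗ J1))
    (hJ23 : J2 ∘ₗ J3 = -(J3 ∘ₗ J2))
    (hJ31 : J3 ∘ₗ J1 = -(J1 ∘ₗ J3))
    (hJ3 : J3 = J1 ∘ₗ J2)
    (R : V →ₗ[ℝ] V →ₗ[ℝ] V →ₗ[ℝ] V →ₗ[ℝ] ℝ)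
    (hskew1 : ∀ X Y Z W, R X Y Z W = -R Y X Z W)
    (hskew2 : ∀ X Y Z W, R X Y Z W = -R X Y W Z)
    (hpair : ∀ X Y Z W, R X Y Z W = R Z W X Y)
    (hbianchi : ∀ X Y Z W, R X Y Z W + R Y Z X W + R Z X Y W = 0)
    (hRJ1a : ∀ X Y Z W, R X Y (J1 Z) (J1 W) = R X Y Z W)
    (hRJ1b : ∀ X Y Z W, R (J1 X) (J1 Y) Z W = R X Y Z W)
    (hRJ2a : ∀ X Y Z W, R X Y (J2 Z) (J2 W) = -R X Y Z W)
    (hRJ2b : ∀ X Y Z W, R (J2 X) (J2 Y) Z W = -R X Y Z W)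
    (hRJ3a : ∀ X Y Z W, R X Y (J3 Z) (J3 W) = -R X Y Z W)
    (hRJ3b : ∀ X Y Z W, R (J3 X) (J3 Y) Z W = -R X Y Z W) :
    ∀ X Y Z W, R X (J1 Y) (J1 Z) W = R X Y Z W ∧
      R X (J2 Y) (J2 Z) W = -R X Y Z W ∧
      R X (J3 Y) (J3 Z) W = -R X Y Z W := by
  have H2 := curvature_mixed_anti J2 hJ2sq R hbianchi hRJ2b
  have H3 := curvature_mixed_anti J3 hJ3sq R hbianchi hRJ3b
  have hJ1eq : ∀ v : V, J1 v = J2 (J3 v) := by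
    intro v
    have h3v : J3 v = J1 (J2 v) := by
      rw [hJ3]; rfl
    have h12 : ∀ w : V, J1 (J2 w) = -(J2 (J1 w)) := by
      intro w
      have := LinearMap.congr_fun hJ12 w
      simpa using this
    have h2sq : ∀ w : V, J2 (J2 w) = -w := by
      intro w
      have := LinearMap.congr_fun hJ2sq w
      simpa using this
    have h21 : ∀ w : V, J2 (J1 w) = -(J1 (J2 w)) := by
      intro w
      rw [h12 w]; simp
    calc J1 v = J2 (J3 v) := by
          rw [h3v, h21 (J2 v), h2sq]; simp
      _ = J2 (J3 v) := rfl
  intro X Y Z W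
  refine ⟨?_, H2 X Y Z W, H3 X Y Z W⟩
  rw [hJ1eq Y, hJ1eq Z, H2 X (J3 Y) (J3 Z) W, H3 X Y Z W]
  ring
end

section
/- Let V be a real vector space, (J₁, J₂, J₃) a hypercomplex structure on V, and R : V⁴ → ℝ a curvature-like tensor satisfying R(X, Y, J₁Z, J₁W) = R(J₁X, J₁Y, Z, W) = R(X, Y, Z, W) and R(X, Y, J_αZ, J_αW) = R(J_αX, J_αY, Z, W) = −R(X, Y, Z, W) for α = 2, 3 and all X, Y, Z, W. Then R ≡ 0. (This is the pointwise algebraic content of the theorem that every pseudo-hyper-Kähler manifold is flat.) -/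
/-! Invariance of `R` under `J₁` in its first pair makes `J₁` skew there, while anti-invariance
under `J₂` makes `J₂` symmetric in each pair; the Bianchi identity then lets `J₂` move from the
first slot to the third, as for the curvature of a holomorphic Riemannian (Norden) metric.
Shifting `J₁` and `J₂` one slot at a time in `R x (J₂ J₁ y) z w`, once directly and once
after rewriting `J₂ J₁ = -J₁ J₂`, shows that this value equals its negative, and `J₂ J₁` is
invertible. -/

section

variable {K V M : Type*} [CommRing K] [AddCommGroup V] [Module K V] [AddCommGroup M] [Module K M]
  {J : V →ₗ[K] V}

theorem apply_apply_eq_neg_of_comp_self (hJ : J ∘ₗ J = -LinearMap.id) (v : V) : J (J v) = -v := by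
  simpa using LinearMap.congr_fun hJ v

theorem apply_left_eq_neg_apply_right_of_invariant (hJ : J ∘ₗ J = -LinearMap.id)
    {B : V → V →ₗ[K] M} (hB : ∀ x y, B (J x) (J y) = B x y) (x y : V) :
    B (J x) y = -B x (J y) := by
  rw [← hB x (J y), apply_apply_eq_neg_of_comp_self hJ, map_neg, neg_neg]

theorem apply_left_eq_apply_right_of_anti_invariant (hJ : J ∘ₗ J = -LinearMap.id)
    {B : V → V →ₗ[K] M} (hB : ∀ x y, B (J x) (J y) = -B x y) (x y : V) :
    B (J x) y = B x (J y) := by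
  rw [← neg_neg (B x (J y)), ← hB x (J y), apply_apply_eq_neg_of_comp_self hJ, map_neg, neg_neg]

end

section

variable {K V : Type*} [Field K] [NeZero (2 : K)] [AddCommGroup V] [Module K V]
  {R : V →ₗ[K] V →ₗ[K] V →ₗ[K] V →ₗ[K] K}

theorem apply_first_eq_apply_third_of_bianchi
    (hbianchi : ∀ x y z w, R x y z w + R y z x w + R z x y w = 0) {J : V →ₗ[K] V}
    (h12 : ∀ x y z w, R (J x) y z w = R x (J y) z w)
    (h34 : ∀ x y z w, R x y (J z) w = R x y z (J w)) (x y z w : V) :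
    R (J x) y z w = R x y (J z) w := by
  have hcyclic := hbianchi x y z (J w)
  rw [← h34, ← h34, ← h34] at hcyclic
  have h2 : 2 * R (J x) y z w = 2 * R x y (J z) w := by
    linear_combination hbianchi (J x) y z w + hbianchi (J y) z x w - hbianchi (J z) x y w
      - hcyclic + h12 z x y w + h12 x y z w - h12 y z x w
  exact mul_left_cancel₀ two_ne_zero h2

theorem eq_zero_of_skew_of_symmetric_of_anticomm
    (hbianchi : ∀ x y z w, R x y z w + R y z x w + R z x y w = 0) {I J : V →ₗ[K] V}
    (hI : I ∘ₗ I = -LinearMap.id) (hJ : J ∘ₗ J = -LinearMap.id) (hIJ : I ∘ₗ J = -(J ∘ₗ I))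
    (hI12 : ∀ x y z w, R (I x) y z w = -R x (I y) z w)
    (hJ12 : ∀ x y z w, R (J x) y z w = R x (J y) z w)
    (hJ34 : ∀ x y z w, R x y (J z) w = R x y z (J w)) (x y z w : V) :
    R x y z w = 0 := by
  have hJ13 := apply_first_eq_apply_third_of_bianchi hbianchi hJ12 hJ34
  have hJI (v : V) : J (I v) = -I (J v) := by
    simpa [neg_eq_iff_eq_neg] using (LinearMap.congr_fun hIJ v).symm
  have hself (a b : V) : R a (J (I b)) z w = -R a (J (I b)) z w := calc
    R a (J (I b)) z w = -R a (I (J b)) z w := by simp only [hJI, map_neg, LinearMap.neg_apply]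
    _ = R (J (I a)) b z w := by rw [hJ12, hI12]
    _ = -R (J a) (I b) z w := by rw [hJ13, hI12, ← hJ13]
    _ = -R a (J (I b)) z w := by rw [hJ12]
  have hJI_surj : Function.Surjective (J ∘ₗ I) := fun b =>
    ⟨I (J b), by simp [apply_apply_eq_neg_of_comp_self hI, apply_apply_eq_neg_of_comp_self hJ]⟩
  obtain ⟨b, rfl⟩ := hJI_surj y
  have h2 : (2 : K) * R x (J (I b)) z w = 0 := by linear_combination hself x b
  exact (mul_eq_zero.mp h2).resolve_left two_ne_zero

end

theorem pseudo_hyper_Kaehler_flat_general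
    (V : Type*) [AddCommGroup V] [Module ℝ V]
    (J1 J2 : V →ₗ[ℝ] V)
    (hJ1sq : J1 ∘ₗ J1 = -LinearMap.id)
    (hJ2sq : J2 ∘ₗ J2 = -LinearMap.id)
    (hJ12 : J1 ∘ₗ J2 = -(J2 ∘ₗ J1))
    (R : V →ₗ[ℝ] V →ₗ[ℝ] V →ₗ[ℝ] V →ₗ[ℝ] ℝ)
    (hbianchi : ∀ X Y Z W, R X Y Z W + R Y Z X W + R Z X Y W = 0)
    (hRJ1b : ∀ X Y Z W, R (J1 X) (J1 Y) Z W = R X Y Z W)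
    (hRJ2a : ∀ X Y Z W, R X Y (J2 Z) (J2 W) = -R X Y Z W)
    (hRJ2b : ∀ X Y Z W, R (J2 X) (J2 Y) Z W = -R X Y Z W) :
    ∀ X Y Z W, R X Y Z W = 0 := by
  have hJ1 (x y z w : V) : R (J1 x) y z w = -R x (J1 y) z w :=
    apply_left_eq_neg_apply_right_of_invariant (B := fun x => ((R x).flip z).flip w) hJ1sq
      (fun x y => hRJ1b x y z w) x y
  have hJ2 (x y z w : V) : R (J2 x) y z w = R x (J2 y) z w :=
    apply_left_eq_apply_right_of_anti_invariant (B := fun x => ((R x).flip z).flip w) hJ2sq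
      (fun x y => hRJ2b x y z w) x y
  exact eq_zero_of_skew_of_symmetric_of_anticomm hbianchi hJ1sq hJ2sq hJ12 hJ1 hJ2
    (fun x y => apply_left_eq_apply_right_of_anti_invariant hJ2sq (hRJ2a x y))

/-- (Pointwise content of the flatness theorem.) A curvature-like tensor `R` on a hypercomplex vector space satisfying the J-invariance identities of a pseudo-hyper-Kähler manifold vanishes identically: every pseudo-hyper-Kähler manifold is flat. -/
theorem pseudo_hyper_Kaehler_flat
    (V : Type*) [AddCommGroup V] [Module ℝ V]
    (J1 J2 J3 : V →ₗ[ℝ] V)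
    (hJ1sq : J1 ∘ₗ J1 = -LinearMap.id)
    (hJ2sq : J2 ∘ₗ J2 = -LinearMap.id)
    (hJ3sq : J3 ∘ₗ J3 = -LinearMap.id)
    (hJ12 : J1 ∘ₗ J2 = -(J2 ∘ₗ J1))
    (hJ23 : J2 ∘ₗ J3 = -(J3 ∘ₗ J2))
    (hJ31 : J3 ∘ₗ J1 = -(J1 ∘ₗ J3))
    (hJ3 : J3 = J1 ∘ₗ J2)
    (R : V →ₗ[ℝ] V →ₗ[ℝ] V →ₗ[ℝ] V →ₗ[ℝ] ℝ)
    (hskew1 : ∀ X Y Z W, R X Y Z W = -R Y X Z W)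
    (hskew2 : ∀ X Y Z W, R X Y Z W = -R X Y W Z)
    (hpair : ∀ X Y Z W, R X Y Z W = R Z W X Y)
    (hbianchi : ∀ X Y Z W, R X Y Z W + R Y Z X W + R Z X Y W = 0)
    (hRJ1a : ∀ X Y Z W, R X Y (J1 Z) (J1 W) = R X Y Z W)
    (hRJ1b : ∀ X Y Z W, R (J1 X) (J1 Y) Z W = R X Y Z W)
    (hRJ2a : ∀ X Y Z W, R X Y (J2 Z) (J2 W) = -R X Y Z W)
    (hRJ2b : ∀ X Y Z W, R (J2 X) (J2 Y) Z W = -R X Y Z W)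
    (hRJ3a : ∀ X Y Z W, R X Y (J3 Z) (J3 W) = -R X Y Z W)
    (hRJ3b : ∀ X Y Z W, R (J3 X) (J3 Y) Z W = -R X Y Z W) :
    ∀ X Y Z W, R X Y Z W = 0 :=
  pseudo_hyper_Kaehler_flat_general V J1 J2 hJ1sq hJ2sq hJ12 R hbianchi hRJ1b hRJ2a hRJ2b
end

section
/- Let V be a finite-dimensional real vector space, g a nondegenerate symmetric bilinear form on V, and J an endomorphism with J² = −Id and g(JX, JY) = −g(X, Y). Suppose a curvature-like tensor R on V is Kählerian with respect to J, i.e. R(X, Y, JZ, JU) = −R(X, Y, Z, U) for all X, Y, Z, U. Then the tensor R^{*J} defined by R^{*J}(X, Y, Z, U) = R(X, Y, Z, JU) is also a curvature-like tensor: it is skew-symmetric in (X, Y) and in (Z, U), symmetric under swapping the pair (X, Y) with (Z, U), and satisfies the first Bianchi identity. -/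
/-- Let `V` be a finite-dimensional real vector space, `g` a nondegenerate
symmetric bilinear form, `J` an endomorphism with `J² = −Id` and `g(JX, JY) = −g(X, Y)`.
If a curvature-like tensor `R` is Kählerian with respect to `J`
(`R(X, Y, JZ, JU) = −R(X, Y, Z, U)`), then `R^{*J}(X, Y, Z, U) = R(X, Y, Z, JU)` is also a
curvature-like tensor: skew-symmetric in `(X, Y)` and in `(Z, U)`, symmetric under swapping
the two pairs, and satisfying the first Bianchi identity. -/
theorem star_tensor_curvature_like
    (V : Type*) [AddCommGroup V] [Module ℝ V] [FiniteDimensional ℝ V]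
    (g : V →ₗ[ℝ] V →ₗ[ℝ] ℝ)
    (hgsymm : ∀ X Y, g X Y = g Y X)
    (hgnd : ∀ X, (∀ Y, g X Y = 0) → X = 0)
    (J : V →ₗ[ℝ] V)
    (hJsq : J ∘ₗ J = -LinearMap.id)
    (hgJ : ∀ X Y, g (J X) (J Y) = -g X Y)
    (R : V →ₗ[ℝ] V →ₗ[ℝ] V →ₗ[ℝ] V →ₗ[ℝ] ℝ)
    (hskew1 : ∀ X Y Z U, R X Y Z U = -R Y X Z U)
    (hskew2 : ∀ X Y Z U, R X Y Z U = -R X Y U Z)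
    (hpair : ∀ X Y Z U, R X Y Z U = R Z U X Y)
    (hbianchi : ∀ X Y Z U, R X Y Z U + R Y Z X U + R Z X Y U = 0)
    (hkaehler : ∀ X Y Z U, R X Y (J Z) (J U) = -R X Y Z U)
    (Rstar : V → V → V → V → ℝ)
    (hRstar : ∀ X Y Z U, Rstar X Y Z U = R X Y Z (J U)) :
    (∀ X Y Z U, Rstar X Y Z U = -Rstar Y X Z U) ∧
    (∀ X Y Z U, Rstar X Y Z U = -Rstar X Y U Z) ∧
    (∀ X Y Z U, Rstar X Y Z U = Rstar Z U X Y) ∧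
    (∀ X Y Z U, Rstar X Y Z U + Rstar Y Z X U + Rstar Z X Y U = 0) := by
  have hJJ : ∀ Z : V, J (J Z) = -Z := by
    intro Z
    have := congrArg (fun f : V →ₗ[ℝ] V => f Z) hJsq
    simpa using this
  -- J can be moved within the last pair
  have h1 : ∀ X Y Z U, R X Y Z (J U) = R X Y (J Z) U := by
    intro X Y Z U
    have h := hkaehler X Y (J Z) U
    rw [hJJ] at h
    simp only [map_neg, LinearMap.neg_apply] at h
    linarith
  -- J can be moved within the first pair
  have h1' : ∀ X Y Z U, R (J X) Y Z U = R X (J Y) Z U := by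
    intro X Y Z U
    rw [hpair (J X) Y Z U, hpair X (J Y) Z U]
    exact (h1 Z U X Y).symm
  -- J can be moved between the pairs
  have key : ∀ X Y Z U,
      (R (J X) Y Z U - R X Y Z (J U)) + (R (J Z) X Y U - R Z X Y (J U)) = 0 := by
    intro X Y Z U
    have hA := hbianchi X Y Z (J U)
    have hB := hbianchi (J X) Y Z U
    have e1 : R Y Z (J X) U = R Y Z X (J U) := (h1 Y Z X U).symm
    have e2 : R Z (J X) Y U = R (J Z) X Y U := by
      rw [hpair Z (J X) Y U, hpair (J Z) X Y U, h1 Y U Z X]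
    rw [e1, e2] at hB
    linarith
  have hmove : ∀ X Y Z U, R (J X) Y Z U = R X Y Z (J U) := by
    intro X Y Z U
    have e1 := key X Y Z U
    have e2 := key Z X Y U
    have e3 := key Y Z X U
    linarith
  refine ⟨?_, ?_, ?_, ?_⟩
  · intro X Y Z U
    rw [hRstar, hRstar, hskew1]
  · intro X Y Z U
    rw [hRstar, hRstar, h1, hskew2]
  · intro X Y Z U
    rw [hRstar, hRstar, ← hmove X Y Z U, h1', hpair]
  · intro X Y Z U
    rw [hRstar, hRstar, hRstar]
    exact hbianchi X Y Z (J U)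
end
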